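/- arXiv:1508.07154 — 4 statements merged into one kernel-verified Lean document; each statement's English description precedes it below -/
import Mathlib

section
/- If G is a simple graph on n ≥ 4 vertices such that every vertex has degree at least n/2 + 1, then any two distinct vertices of G are joined by a Hamiltonian path, i.e., a path that visits every vertex of G. -/
open SimpleGraph

/-- The largest even integer not greater than `x`. -/
noncomputable def evenFloor (x : ℝ) : ℤ := 2 * ⌊x / 2⌋

/-- The largest odd integer not greater than `x`. -/
noncomputable def oddFloor (x : ℝ) : ℤ := 2 * ⌊(x - 1) / 2⌋ + 1

/-- `G` contains a cycle on exactly `m` vertices. -/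
def HasCycleLen {V : Type*} (G : SimpleGraph V) (m : ℕ) : Prop :=
  ∃ (v : V) (w : G.Walk v v), w.IsCycle ∧ w.length = m

/-- The colour-`i` subgraph of the complete graph on `V` whose edges are coloured by `χ`. -/
def colourGraph {V : Type*} (χ : Sym2 V → Fin 3) (i : Fin 3) : SimpleGraph V where
  Adj u v := u ≠ v ∧ χ s(u, v) = i
  symm := by
    constructor
    intro u v h
    refine ⟨h.1.symm, ?_⟩
    rw [Sym2.eq_swap]
    exact h.2
  loopless := ⟨fun u h => h.1 rfl⟩

/-- Every 3-colouring of the edges of the complete graph on `N` vertices yields, for some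
`i ∈ {1,2,3}`, a cycle on `mᵢ` vertices all of whose edges have colour `i`. -/
def CycleRamseyProp (m₁ m₂ m₃ N : ℕ) : Prop :=
  ∀ χ : Sym2 (Fin N) → Fin 3,
    HasCycleLen (colourGraph χ 0) m₁ ∨ HasCycleLen (colourGraph χ 1) m₂ ∨
      HasCycleLen (colourGraph χ 2) m₃

/-- The degree of `v` in `G`. -/
noncomputable def ndeg {V : Type*} (G : SimpleGraph V) (v : V) : ℕ :=
  {u : V | G.Adj v u}.ncard

/-- The number of neighbours of `v` inside the set `S`. -/
noncomputable def degIn {V : Type*} (G : SimpleGraph V) (S : Finset V) (v : V) : ℕ :=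
  {u : V | u ∈ S ∧ G.Adj v u}.ncard

/-- The number of ordered pairs `(a, b) ∈ A × B` with `a` adjacent to `b` in `G`. -/
noncomputable def pairCount {V : Type*} (G : SimpleGraph V) (A B : Finset V) : ℕ :=
  {p : V × V | p.1 ∈ A ∧ p.2 ∈ B ∧ G.Adj p.1 p.2}.ncard

/-- The density `d(A,B)` of the pair `(A, B)` in `G`. -/
noncomputable def density {V : Type*} (G : SimpleGraph V) (A B : Finset V) : ℝ :=
  (pairCount G A B : ℝ) / ((A.card : ℝ) * (B.card : ℝ))

/-- The pair `(A, B)` is `(ε, G)`-regular. -/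
def IsRegularPair {V : Type*} (G : SimpleGraph V) (ε : ℝ) (A B : Finset V) : Prop :=
  ∀ A' ⊆ A, ∀ B' ⊆ B, ε * (A.card : ℝ) ≤ (A'.card : ℝ) →
    ε * (B.card : ℝ) ≤ (B'.card : ℝ) →
    |density G A' B' - density G A B| < ε

/-- The pair `(A, B)` is simultaneously `(ε, Gᵣ)`-regular for `r = 1, 2, 3`. -/
def SimRegular {V : Type*} (ε : ℝ) (G₁ G₂ G₃ : SimpleGraph V) (A B : Finset V) : Prop :=
  IsRegularPair G₁ ε A B ∧ IsRegularPair G₂ ε A B ∧ IsRegularPair G₃ ε A B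

/-- `M` is a connected-matching in `G`: a collection of edges, pairwise vertex-disjoint,
all lying in the same connected component of `G`. -/
def IsConnMatching {V : Type*} (G : SimpleGraph V) (M : Finset (V × V)) : Prop :=
  (∀ e ∈ M, G.Adj e.1 e.2) ∧
  (∀ e ∈ M, ∀ f ∈ M, e ≠ f → e.1 ≠ f.1 ∧ e.1 ≠ f.2 ∧ e.2 ≠ f.1 ∧ e.2 ≠ f.2) ∧
  (∀ e ∈ M, ∀ f ∈ M, G.Reachable e.1 f.1)

/-- `G` contains a connected-matching on at least `m` vertices. -/
def HasConnMatching {V : Type*} (G : SimpleGraph V) (m : ℝ) : Prop :=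
  ∃ M : Finset (V × V), IsConnMatching G M ∧ m ≤ 2 * (M.card : ℝ)

/-- `G` contains an odd connected-matching on at least `m` vertices: a connected-matching
whose component also contains an odd cycle. -/
def HasOddConnMatching {V : Type*} (G : SimpleGraph V) (m : ℝ) : Prop :=
  ∃ M : Finset (V × V), IsConnMatching G M ∧ m ≤ 2 * (M.card : ℝ) ∧
    ∃ (v : V) (w : G.Walk v v), w.IsCycle ∧ Odd w.length ∧ ∀ e ∈ M, G.Reachable e.1 v

/-- `(V₀, V₁, …, V_K)` (given as `P : Fin (K+1) → Finset V`, with `P 0` the exceptional class)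
is an `(ε, G₁, G₂, G₃)`-regular partition. -/
def IsRegularPartition3 {V : Type*} [Fintype V] (ε : ℝ) (G₁ G₂ G₃ : SimpleGraph V)
    {K : ℕ} (P : Fin (K + 1) → Finset V) : Prop :=
  (∀ i j, i ≠ j → Disjoint (P i) (P j)) ∧
  (∀ v : V, ∃ i, v ∈ P i) ∧
  ((P 0).card : ℝ) ≤ ε * (Fintype.card V : ℝ) ∧
  (∀ i j : Fin (K + 1), i ≠ 0 → j ≠ 0 → (P i).card = (P j).card) ∧
  (∀ i : Fin (K + 1), i ≠ 0 →
    (({j : Fin (K + 1) | j ≠ 0 ∧ j ≠ i ∧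
        ¬ SimRegular ε G₁ G₂ G₃ (P i) (P j)}.ncard : ℝ) ≤ ε * K))

/-- The colour-`Gc` subgraph of the three-multicoloured `(ε, ξ, Π)`-reduced-graph of the
three-coloured graph with colour subgraphs `G₁, G₂, G₃` and regular partition `P`:
vertices are the non-exceptional classes `P 1, …, P K`; two of them are adjacent if the pair is
simultaneously `(ε, Gᵣ)`-regular for `r = 1,2,3` and receive colour `Gc` if moreover the
`Gc`-density of the pair is at least `ξ`. -/
def reducedGraph {V : Type*} (ε ξ : ℝ) (G₁ G₂ G₃ : SimpleGraph V) {K : ℕ}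
    (P : Fin (K + 1) → Finset V) (Gc : SimpleGraph V) : SimpleGraph (Fin K) where
  Adj a b := a ≠ b ∧
    (SimRegular ε G₁ G₂ G₃ (P a.succ) (P b.succ) ∧
      SimRegular ε G₁ G₂ G₃ (P b.succ) (P a.succ)) ∧
    (ξ ≤ density Gc (P a.succ) (P b.succ) ∧ ξ ≤ density Gc (P b.succ) (P a.succ))
  symm := by
    constructor
    intro a b h
    exact ⟨h.1.symm, ⟨h.2.1.2, h.2.1.1⟩, ⟨h.2.2.2, h.2.2.1⟩⟩
  loopless := ⟨fun a h => h.1 rfl⟩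

/-- The two-multicoloured graph induced on `X`, with colour subgraphs `Gγ₁` (colour `γ₁`)
and `Gγ₂` (colour `γ₂`), contains a two-multicoloured spanning subgraph belonging to the class
`H(x₁, x₂, c₁, c₂, γ₁, γ₂)`. -/
def ContainsClassH {V : Type*} [DecidableEq V] (Gγ₁ Gγ₂ : SimpleGraph V) (X : Finset V)
    (x₁ x₂ c₁ c₂ : ℝ) : Prop :=
  ∃ (H₁ H₂ : SimpleGraph V) (X₁ X₂ : Finset V),
    H₁ ≤ Gγ₁ ∧ H₂ ≤ Gγ₂ ∧
    (∀ u v : V, (H₁ ⊔ H₂).Adj u v → u ∈ X ∧ v ∈ X) ∧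
    Disjoint X₁ X₂ ∧ X₁ ∪ X₂ = X ∧
    x₁ ≤ (X₁.card : ℝ) ∧ x₂ ≤ (X₂.card : ℝ) ∧
    (∀ v ∈ X, ((X.card : ℝ) - 1) - c₁ ≤ (degIn (H₁ ⊔ H₂) X v : ℝ)) ∧
    (∀ v ∈ X₁, (1 - c₂) * ((X₁.card : ℝ) - 1) ≤ (degIn H₁ X₁ v : ℝ)) ∧
    (∀ v ∈ X₁, (degIn H₂ X₁ v : ℝ) ≤ c₂ * ((X₁.card : ℝ) - 1)) ∧
    (∀ v ∈ X₁, (1 - c₂) * (X₂.card : ℝ) ≤ (degIn H₂ X₂ v : ℝ)) ∧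
    (∀ v ∈ X₂, (1 - c₂) * (X₁.card : ℝ) ≤ (degIn H₂ X₁ v : ℝ)) ∧
    (∀ v ∈ X₁, (degIn H₁ X₂ v : ℝ) ≤ c₂ * (X₂.card : ℝ)) ∧
    (∀ v ∈ X₂, (degIn H₁ X₁ v : ℝ) ≤ c₂ * (X₁.card : ℝ))

/-- Membership of the structure `H((a − 2η^{1/32})k, (b/2 − 2η^{1/32})k, 3η⁴k, η^{1/32}, γ₁, γ₂)`
on a vertex set `X`, where `Ga`, `Gb` are the colour-`γ₁` and colour-`γ₂` subgraphs. -/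
def MemH1 {V : Type*} [DecidableEq V] (Ga Gb : SimpleGraph V) (a b η : ℝ) (k : ℕ)
    (X : Finset V) : Prop :=
  ContainsClassH Ga Gb X ((a - 2 * η ^ ((1 : ℝ) / 32)) * k)
    ((b / 2 - 2 * η ^ ((1 : ℝ) / 32)) * k) (3 * η ^ 4 * k) (η ^ ((1 : ℝ) / 32))

/-- The edge `uv` is coloured exclusively with the colour of `Ga` (and not the colours of
`Gb`, `Gc`). -/
def ExclColour {V : Type*} (Ga Gb Gc : SimpleGraph V) (u v : V) : Prop :=
  Ga.Adj u v ∧ ¬ Gb.Adj u v ∧ ¬ Gc.Adj u v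

/-- The three-multicoloured graph with colour subgraphs `G₁, G₂, G₃` (red, blue, green)
contains a subgraph from the class `K(x₁, x₂, x₃, c)`. -/
def ContainsClassK {V : Type*} [DecidableEq V] (G₁ G₂ G₃ : SimpleGraph V)
    (x₁ x₂ x₃ c : ℝ) : Prop :=
  ∃ (H : SimpleGraph V) (X₁ X₂ X₃ : Finset V),
    H ≤ G₁ ⊔ G₂ ⊔ G₃ ∧
    Disjoint X₁ X₂ ∧ Disjoint X₁ X₃ ∧ Disjoint X₂ X₃ ∧
    x₁ ≤ (X₁.card : ℝ) ∧ x₂ ≤ (X₂.card : ℝ) ∧ x₃ ≤ (X₃.card : ℝ) ∧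
    (∀ u v : V, H.Adj u v → u ∈ X₁ ∪ X₂ ∪ X₃ ∧ v ∈ X₁ ∪ X₂ ∪ X₃) ∧
    (∀ v ∈ X₁ ∪ X₂ ∪ X₃,
      (((X₁ ∪ X₂ ∪ X₃).card : ℝ) - 1) - c ≤ (degIn H (X₁ ∪ X₂ ∪ X₃) v : ℝ)) ∧
    (∀ u ∈ X₁, ∀ v ∈ X₃, H.Adj u v → ExclColour G₁ G₂ G₃ u v) ∧
    (∀ u ∈ X₂, ∀ v ∈ X₃, H.Adj u v → ExclColour G₂ G₁ G₃ u v) ∧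
    (∀ u ∈ X₃, ∀ v ∈ X₃, H.Adj u v → ExclColour G₃ G₁ G₂ u v)

/-- The three-multicoloured graph with colour subgraphs `G₁, G₂, G₃` (red, blue, green)
contains a subgraph from the class `K*(x₁, x₂, y₁, y₂, z, c)`. -/
def ContainsClassKstar {V : Type*} [DecidableEq V] (G₁ G₂ G₃ : SimpleGraph V)
    (x₁ x₂ y₁ y₂ z c : ℝ) : Prop :=
  ∃ (H : SimpleGraph V) (X₁ X₂ Y₁ Y₂ : Finset V),
    H ≤ G₁ ⊔ G₂ ⊔ G₃ ∧
    Disjoint X₁ X₂ ∧ Disjoint X₁ Y₁ ∧ Disjoint X₁ Y₂ ∧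
    Disjoint X₂ Y₁ ∧ Disjoint X₂ Y₂ ∧ Disjoint Y₁ Y₂ ∧
    x₁ ≤ (X₁.card : ℝ) ∧ x₂ ≤ (X₂.card : ℝ) ∧ y₁ ≤ (Y₁.card : ℝ) ∧ y₂ ≤ (Y₂.card : ℝ) ∧
    z ≤ (Y₁.card : ℝ) + (Y₂.card : ℝ) ∧
    (∀ u v : V, H.Adj u v → u ∈ X₁ ∪ X₂ ∪ Y₁ ∪ Y₂ ∧ v ∈ X₁ ∪ X₂ ∪ Y₁ ∪ Y₂) ∧
    (∀ v ∈ X₁ ∪ X₂ ∪ Y₁ ∪ Y₂,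
      (((X₁ ∪ X₂ ∪ Y₁ ∪ Y₂).card : ℝ) - 1) - c ≤ (degIn H (X₁ ∪ X₂ ∪ Y₁ ∪ Y₂) v : ℝ)) ∧
    (∀ u ∈ X₁, ∀ v ∈ Y₁, H.Adj u v → ExclColour G₁ G₂ G₃ u v) ∧
    (∀ u ∈ X₂, ∀ v ∈ Y₂, H.Adj u v → ExclColour G₁ G₂ G₃ u v) ∧
    (∀ u ∈ X₁, ∀ v ∈ Y₂, H.Adj u v → ExclColour G₂ G₁ G₃ u v) ∧
    (∀ u ∈ X₂, ∀ v ∈ Y₁, H.Adj u v → ExclColour G₂ G₁ G₃ u v) ∧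
    (∀ u ∈ X₁, ∀ v ∈ X₂, H.Adj u v → ExclColour G₃ G₁ G₂ u v) ∧
    (∀ u ∈ Y₁, ∀ v ∈ Y₂, H.Adj u v → ExclColour G₃ G₁ G₂ u v)


/-!
Add the edge `uv` to `G`; the resulting graph `H` has minimum degree at least `(n + 2) / 2`, and
a Hamiltonian cycle of `H` through `uv` is a Hamiltonian `u`-`v` path of `G` closed by that edge.

Take a longest path `P` of `H` that traverses `uv`. Both endpoints `a`, `b` of `P` have all their
neighbours on `P`, so counting positions gives consecutive vertices `y, x` of `P` with `a ~ x`,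
`b ~ y` and `x ∉ {u, v}`. Replacing the edge `yx` by `ax` and `yb` closes `P` into a cycle on the
same vertices that still contains `uv`. If this cycle missed a vertex `w`, then `w` and `v` would
have a common neighbour `c ≠ u`, and opening the cycle next to `c` would give a longer path
through `uv`.
-/

namespace List

variable {α : Type*}

lemma pair_infix_append_of_forall_head_ne {a b : α} {l₁ l₂ : List α} (h : [a, b] <:+: l₁ ++ l₂)
    (hb : ∀ c ∈ l₂.head?, c ≠ b) : [a, b] <:+: l₁ ∨ [a, b] <:+: l₂ := by
  rcases infix_append_iff.1 h with h | h | ⟨m₁, m₂, hm, h₁, h₂⟩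
  · exact .inl h
  · exact .inr h
  · match m₁, m₂, hm with
    | [], _, rfl => exact .inr h₂.isInfix
    | [_, _], [], rfl => exact .inl h₁.isInfix
    | [_], [_], rfl =>
      obtain ⟨l, rfl⟩ := h₂
      exact absurd rfl (hb b (by simp))

lemma exists_isRotated_cons_cons_of_infix {a b : α} {l : List α} (h : [a, b] <:+: l) :
    ∃ T, a :: b :: T ~r l := by
  obtain ⟨s, t, rfl⟩ := h
  exact ⟨t ++ s, by simpa using (isRotated_append (l := s) (l' := a :: b :: t)).symm⟩

lemma exists_eq_append_cons_cons_of_idxOf_eq [DecidableEq α] {l : List α} {x y : α} (hx : x ∈ l)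
    (h : l.idxOf x = l.idxOf y + 1) : ∃ s t, l = s ++ y :: x :: t := by
  have hxl := idxOf_lt_length_iff.2 hx
  have hyl : l.idxOf y < l.length := by omega
  refine ⟨l.take (l.idxOf y), l.drop (l.idxOf x + 1), ?_⟩
  conv_lhs => rw [← take_append_drop (l.idxOf y) l, drop_eq_getElem_cons hyl,
    drop_eq_getElem_cons (by omega), getElem_idxOf hyl]
  simp only [← h, getElem_idxOf hxl]

end List

namespace Cycle

variable {α : Type*} {R : α → α → Prop}

lemma Chain.isChain {l : List α} (h : Chain R l) : l.IsChain R := by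
  cases l with
  | nil => exact .nil
  | cons a m => exact List.IsChain.left_of_append (l₂ := [a]) ((chain_coe_cons R a m).1 h)

lemma Chain.isChain_append_comm {s t : List α} (h : Chain R ↑(s ++ t)) : (t ++ s).IsChain R :=
  (coe_eq_coe.2 List.isRotated_append ▸ h : Chain R ↑(t ++ s)).isChain

lemma chain_append_reverse (hR : ∀ ⦃a b⦄, R a b → R b a) {l₁ l₂ : List α} (hl₁ : l₁ ≠ [])
    (hl₂ : l₂ ≠ []) (h₁ : l₁.IsChain R) (h₂ : l₂.IsChain R)
    (hhead : ∀ a ∈ l₁.head?, ∀ b ∈ l₂.head?, R a b)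
    (hlast : ∀ a ∈ l₁.getLast?, ∀ b ∈ l₂.getLast?, R a b) : Chain R ↑(l₁ ++ l₂.reverse) := by
  obtain ⟨a, m, rfl⟩ := List.exists_cons_of_ne_nil hl₁
  have hcons : (a :: l₂).IsChain R := List.isChain_cons.2 ⟨hhead a rfl, h₂⟩
  have hC : a :: (m ++ l₂.reverse ++ [a]) = (a :: m) ++ (a :: l₂).reverse := by simp
  rw [List.cons_append, chain_coe_cons, hC]
  refine List.isChain_append.2 ⟨h₁, List.isChain_reverse.2 (hcons.imp fun _ _ h => hR h), ?_⟩
  intro x hx y hy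
  exact hlast x hx y (by grind)

/-- Replacing the edge `yx` of the path `s ++ y :: x :: t` from `a` to `b` by `ax` and `yb`
gives a cycle on the same vertices, which can be read starting from any other edge `cd`. -/
lemma exists_chain_cons_cons_of_crossing (hR : ∀ ⦃a b⦄, R a b → R b a) {a b c d x y : α}
    {s t : List α} (hP : (s ++ y :: x :: t).IsChain R) (hcd : [c, d] <:+: s ++ y :: x :: t)
    (hxd : x ≠ d) (ha : (s ++ y :: x :: t).head? = some a)
    (hb : (s ++ y :: x :: t).getLast? = some b) (hax : R a x) (hby : R b y) :
    ∃ T, Chain R ↑(c :: d :: T) ∧ (c :: d :: T).Perm (s ++ y :: x :: t) := by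
  have hsplit : s ++ y :: x :: t = (s ++ [y]) ++ x :: t := by simp
  rw [hsplit] at hP hcd ha hb ⊢
  have ha' : (s ++ [y]).head? = some a := by rwa [List.head?_append_of_ne_nil _ (by simp)] at ha
  have hb' : (x :: t).getLast? = some b := by
    rwa [List.getLast?_append_of_ne_nil _ (by simp)] at hb
  obtain ⟨h₁, h₂, -⟩ := List.isChain_append.1 hP
  obtain ⟨C, hC, hCP, hcdC⟩ :
      ∃ C : List α, Chain R ↑C ∧ C.Perm ((s ++ [y]) ++ x :: t) ∧ [c, d] <:+: C := by
    rcases List.pair_infix_append_of_forall_head_ne hcd (by simpa using hxd) with h | h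
    · exact ⟨(s ++ [y]) ++ (x :: t).reverse,
        chain_append_reverse hR (by simp) (by simp) h₁ h₂ (by simpa [ha'] using hax)
          (by simpa [hb'] using hR hby),
        .append_left _ (List.reverse_perm _), h.trans (List.prefix_append _ _).isInfix⟩
    -- `cd` lies on `x :: t`: traverse the cycle the other way round to keep it in this order
    · exact ⟨(x :: t) ++ (s ++ [y]).reverse,
        chain_append_reverse hR (by simp) (by simp) h₂ h₁ (by simpa [ha'] using hR hax)
          (by simpa [hb'] using hby),
        ((List.reverse_perm _).append_left _).trans List.perm_append_comm,
        h.trans (List.prefix_append _ _).isInfix⟩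
  obtain ⟨T, hT⟩ := List.exists_isRotated_cons_cons_of_infix hcdC
  exact ⟨T, coe_eq_coe.2 hT ▸ hC, hT.perm.trans hCP⟩

end Cycle

namespace SimpleGraph

open Finset

variable {V : Type*} {H : SimpleGraph V} {u v : V}

section Counting

variable [Fintype V] [DecidableEq V] [DecidableRel H.Adj]

lemma le_card_neighborFinset_inter {k : ℕ} {x y : V}
    (h : Fintype.card V + k ≤ H.degree x + H.degree y) :
    k ≤ #(H.neighborFinset x ∩ H.neighborFinset y) := by
  have := card_union_add_card_inter (H.neighborFinset x) (H.neighborFinset y)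
  have := card_le_univ (H.neighborFinset x ∪ H.neighborFinset y)
  simp only [card_neighborFinset_eq_degree] at *
  omega

/-- Pigeonhole: the positions of the neighbours of `a` outside `F` and the positions just after
the neighbours of `b` all lie among the `P.length - 1` positions `1, …, P.length - 1`, and there
are more than `P.length - 1` of them. -/
lemma exists_crossing {P : List V} {a b : V} (ha : P.head? = some a) (hb : P.getLast? = some b)
    (haP : ∀ x, H.Adj a x → x ∈ P) (hbP : ∀ y, H.Adj b y → y ∈ P) (F : Finset V)
    (hdeg : P.length + #F ≤ H.degree a + H.degree b) :
    ∃ s y x t, P = s ++ y :: x :: t ∧ H.Adj a x ∧ H.Adj b y ∧ x ∉ F := by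
  set A := (H.neighborFinset a \ F).image P.idxOf
  set B := (H.neighborFinset b).image (P.idxOf · + 1)
  obtain ⟨P₁, hP₁⟩ := List.head?_eq_some_iff.1 ha
  obtain ⟨P₂, hP₂⟩ := List.getLast?_eq_some_iff.1 hb
  have hA : A ⊆ Ioo 0 P.length := by
    intro k hk
    simp only [A, mem_image, mem_sdiff, mem_neighborFinset] at hk
    obtain ⟨x, ⟨hax, -⟩, rfl⟩ := hk
    have hx : x ∈ P₁ := by simpa [hP₁, (H.ne_of_adj hax).symm] using haP x hax
    have := List.idxOf_lt_length_iff.2 hx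
    rw [mem_Ioo, hP₁, List.idxOf_cons_ne _ (H.ne_of_adj hax), List.length_cons]
    omega
  have hB : B ⊆ Ioo 0 P.length := by
    intro k hk
    simp only [B, mem_image, mem_neighborFinset] at hk
    obtain ⟨y, hby, rfl⟩ := hk
    have hy : y ∈ P₂ := by simpa [hP₂, (H.ne_of_adj hby).symm] using hbP y hby
    have := List.idxOf_lt_length_iff.2 hy
    rw [mem_Ioo, hP₂, List.idxOf_append_of_mem hy, List.length_append, List.length_singleton]
    omega
  have hcardA : H.degree a - #F ≤ #A := by
    rw [card_image_of_injOn, ← card_neighborFinset_eq_degree]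
    · exact le_card_sdiff _ _
    · intro x hx x' _ hxx'
      simp only [coe_sdiff, Set.mem_sdiff, mem_coe, mem_neighborFinset] at hx
      exact (List.idxOf_inj (haP x hx.1)).1 hxx'
  have hcardB : H.degree b = #B := by
    rw [card_image_of_injOn, ← card_neighborFinset_eq_degree]
    intro y hy y' _ hyy'
    simp only [mem_coe, mem_neighborFinset] at hy
    exact (List.idxOf_inj (hbP y hy)).1 (by simpa using hyy')
  have hPpos : 0 < P.length := by simp [hP₁]
  obtain ⟨k, hk⟩ := inter_nonempty_of_card_lt_card_add_card hA hB (by rw [Nat.card_Ioo]; omega)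
  simp only [A, B, mem_inter, mem_image, mem_sdiff, mem_neighborFinset] at hk
  obtain ⟨⟨x, ⟨hax, hxF⟩, rfl⟩, y, hby, hyx⟩ := hk
  obtain ⟨s, t, hst⟩ := List.exists_eq_append_cons_cons_of_idxOf_eq (haP x hax) hyx.symm
  exact ⟨s, y, x, t, hst, hax, hby, hxF⟩

end Counting

structure IsPathThroughEdge (H : SimpleGraph V) (v u : V) (l : List V) : Prop where
  isChain : l.IsChain H.Adj
  nodup : l.Nodup
  infix_pair : [v, u] <:+: l

lemma exists_isPathThroughEdge_forall_length_le [Fintype V] (hvu : H.Adj v u) :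
    ∃ P, IsPathThroughEdge H v u P ∧
      ∀ Q, IsPathThroughEdge H v u Q → Q.length ≤ P.length := by
  set S := {n | ∃ l, IsPathThroughEdge H v u l ∧ l.length = n}
  have hbdd : BddAbove S :=
    ⟨Fintype.card V, by rintro _ ⟨l, hl, rfl⟩; exact hl.nodup.length_le_card⟩
  have hS : S.Nonempty :=
    ⟨_, [v, u], ⟨List.isChain_pair.2 hvu, by simp [hvu.ne], List.infix_rfl⟩, rfl⟩
  obtain ⟨P, hP, hPlen⟩ := Nat.sSup_mem hS hbdd
  exact ⟨P, hP, fun Q hQ => hPlen ▸ le_csSup hbdd ⟨Q, hQ, rfl⟩⟩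

lemma IsPathThroughEdge.mem_of_adj_of_head?_eq {P : List V} (hP : IsPathThroughEdge H v u P)
    (hmax : ∀ Q, IsPathThroughEdge H v u Q → Q.length ≤ P.length) {a x : V}
    (ha : P.head? = some a) (hx : H.Adj a x) : x ∈ P := by
  by_contra hxP
  have hQ : IsPathThroughEdge H v u (x :: P) :=
    ⟨List.isChain_cons.2 ⟨by simpa [ha] using hx.symm, hP.isChain⟩,
      List.nodup_cons.2 ⟨hxP, hP.nodup⟩, List.infix_cons hP.infix_pair⟩
  simpa using hmax _ hQ

lemma IsPathThroughEdge.mem_of_adj_of_getLast?_eq {P : List V} (hP : IsPathThroughEdge H v u P)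
    (hmax : ∀ Q, IsPathThroughEdge H v u Q → Q.length ≤ P.length) {b y : V}
    (hb : P.getLast? = some b) (hy : H.Adj b y) : y ∈ P := by
  by_contra hyP
  have hQ : IsPathThroughEdge H v u (P ++ [y]) :=
    ⟨List.isChain_append.2 ⟨hP.isChain, .singleton y, by simpa [hb] using hy⟩,
      List.concat_eq_append .. ▸ hP.nodup.concat hyP,
      hP.infix_pair.trans (List.prefix_append _ _).isInfix⟩
  simpa using hmax _ hQ

lemma exists_isPathThroughEdge_length_eq_of_adj {T : List V}
    (hC : Cycle.Chain H.Adj ↑(v :: u :: T)) (hnd : (v :: u :: T).Nodup) {y z : V}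
    (hz : z ∈ v :: u :: T) (hzu : z ≠ u) (hy : y ∉ v :: u :: T) (hzy : H.Adj z y) :
    ∃ Q, IsPathThroughEdge H v u Q ∧ Q.length = T.length + 3 := by
  obtain ⟨s, t, hst, hvu⟩ : ∃ s t, v :: u :: T = s ++ z :: t ∧ [v, u] <:+: z :: t ++ s := by
    rcases List.mem_cons.1 hz with rfl | hz
    · exact ⟨[], u :: T, rfl, [], T, by simp⟩
    · obtain ⟨T₁, T₂, rfl⟩ := List.append_of_mem ((List.mem_cons.1 hz).resolve_left hzu)
      exact ⟨v :: u :: T₁, T₂, by simp, z :: T₂, T₁, by simp⟩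
  have hlen := congrArg List.length hst
  rw [hst] at hC hnd hy
  have hperm : (z :: t ++ s).Perm (s ++ z :: t) := List.perm_append_comm
  refine ⟨y :: (z :: t ++ s), ⟨List.isChain_cons.2 ⟨by simpa using hzy.symm,
    hC.isChain_append_comm⟩, List.nodup_cons.2 ⟨fun h => hy (hperm.mem_iff.1 h),
    hperm.nodup_iff.2 hnd⟩, List.infix_cons hvu⟩, ?_⟩
  simp only [List.length_cons, List.length_append] at hlen ⊢
  omega

theorem exists_spanning_cycle_chain_through_edge [Fintype V] [DecidableEq V] [DecidableRel H.Adj]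
    (hdeg : ∀ x, Fintype.card V + 2 ≤ 2 * H.degree x) (hvu : H.Adj v u) :
    ∃ T, Cycle.Chain H.Adj ↑(v :: u :: T) ∧ (v :: u :: T).Nodup ∧ ∀ x, x ∈ v :: u :: T := by
  obtain ⟨P, hP, hmax⟩ := exists_isPathThroughEdge_forall_length_le hvu
  have hPne : P ≠ [] := by rintro rfl; simpa using hP.infix_pair.length_le
  obtain ⟨a, ha⟩ : ∃ a, P.head? = some a := ⟨_, List.head?_eq_some_head hPne⟩
  obtain ⟨b, hb⟩ : ∃ b, P.getLast? = some b := ⟨_, List.getLast?_eq_some_getLast hPne⟩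
  have hdeg_ab : P.length + #{u, v} ≤ H.degree a + H.degree b := by
    have := hP.nodup.length_le_card
    have := hdeg a
    have := hdeg b
    have := card_le_two (a := u) (b := v)
    omega
  obtain ⟨s, y, x, t, rfl, hax, hby, hxuv⟩ := exists_crossing ha hb
    (fun _ => hP.mem_of_adj_of_head?_eq hmax ha) (fun _ => hP.mem_of_adj_of_getLast?_eq hmax hb)
    {u, v} hdeg_ab
  have hxu : x ≠ u := fun h => hxuv (by simp [h])
  obtain ⟨T, hC, hperm⟩ := Cycle.exists_chain_cons_cons_of_crossing (fun _ _ h => h.symm)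
    hP.isChain hP.infix_pair hxu ha hb hax hby
  have hnd := hperm.nodup_iff.2 hP.nodup
  refine ⟨T, hC, hnd, fun w => by_contra fun hw => ?_⟩
  obtain ⟨c, hc, hcu⟩ := exists_mem_ne
    (le_card_neighborFinset_inter (H := H) (k := 2) (x := w) (y := v)
      (by have := hdeg w; have := hdeg v; omega)) u
  rw [mem_inter, mem_neighborFinset, mem_neighborFinset] at hc
  obtain ⟨Q, hQ, hQlen⟩ : ∃ Q, IsPathThroughEdge H v u Q ∧ Q.length = T.length + 3 := by
    by_cases hcC : c ∈ v :: u :: T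
    · exact exists_isPathThroughEdge_length_eq_of_adj hC hnd hcC hcu hw hc.1.symm
    · exact exists_isPathThroughEdge_length_eq_of_adj hC hnd List.mem_cons_self hvu.ne hcC hc.2
  have := hmax Q hQ
  have := hperm.length_eq
  simp only [List.length_cons] at this
  omega

lemma isChain_of_isChain_sup_edge {G : SimpleGraph V} {T : List V} (hu : u ∉ T) (hv : v ∉ T)
    (hT : T ≠ []) (h : (u :: (T ++ [v])).IsChain (G ⊔ edge u v).Adj) :
    (u :: (T ++ [v])).IsChain G.Adj := by
  have key (x y : V) (hxy : (G ⊔ edge u v).Adj x y) (hxT : x ∈ T ∨ y ∈ T) : G.Adj x y := by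
    simp only [sup_adj, edge_adj] at hxy
    grind
  rw [← List.cons_append, List.isChain_append, List.isChain_cons] at h ⊢
  obtain ⟨⟨hu', hT'⟩, -, hv'⟩ := h
  refine ⟨⟨fun y hy => key _ _ (hu' y hy) (.inr (List.mem_of_mem_head? hy)),
    (List.IsChain.iff_mem.1 hT').imp fun x y h => key x y h.2.2 (.inl h.1)⟩, .singleton v,
    fun x hx y hy => key x y (hv' x hx y hy) (.inl ?_)⟩
  grind

lemma exists_isHamiltonian_of_cycle_chain_sup_edge [DecidableEq V] {G : SimpleGraph V}
    {T : List V} (hT : T ≠ []) (hC : Cycle.Chain (G ⊔ edge u v).Adj ↑(v :: u :: T))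
    (hnd : (v :: u :: T).Nodup) (hspan : ∀ x, x ∈ v :: u :: T) :
    ∃ p : G.Walk u v, p.IsHamiltonian := by
  have hperm : (u :: (T ++ [v])).Perm (v :: u :: T) :=
    List.perm_append_comm (l₁ := u :: T) (l₂ := [v])
  have huT : u ∉ T := (List.nodup_cons.1 (List.nodup_cons.1 hnd).2).1
  have hvT : v ∉ T := fun h => (List.nodup_cons.1 hnd).1 (List.mem_cons_of_mem u h)
  have hQ : (u :: (T ++ [v])).IsChain G.Adj := isChain_of_isChain_sup_edge huT hvT hT
    (Cycle.Chain.isChain_append_comm (s := [v]) (t := u :: T) hC)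
  obtain ⟨p, hp⟩ : ∃ p : G.Walk u v, p.support = u :: (T ++ [v]) :=
    ⟨(Walk.ofSupport _ (List.cons_ne_nil _ _) hQ).copy rfl (by simp),
      (Walk.support_copy ..).trans (Walk.support_ofSupport ..)⟩
  refine ⟨p, Walk.IsPath.isHamiltonian_of_mem ?_ fun x => ?_⟩
  · rw [Walk.isPath_def, hp]
    exact hperm.nodup_iff.2 hnd
  · rw [hp]
    exact hperm.mem_iff.2 (hspan x)

end SimpleGraph

open SimpleGraph Finset

lemma ndeg_eq_degree {V : Type*} (G : SimpleGraph V) (v : V) [Fintype (G.neighborSet v)] :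
    ndeg G v = G.degree v := by
  rw [ndeg, ← card_neighborFinset_eq_degree, neighborFinset_def, ← Set.ncard_eq_toFinset_card']
  rfl

theorem dirac_hamiltonian_path_general {V : Type*} [Fintype V] [DecidableEq V] (G : SimpleGraph V)
    (hdeg : ∀ v : V, (Fintype.card V : ℝ) / 2 + 1 ≤ (ndeg G v : ℝ))
    (u v : V) (huv : u ≠ v) :
    ∃ p : G.Walk u v, p.IsHamiltonian := by
  classical
  have hdegG (x : V) : Fintype.card V + 2 ≤ 2 * G.degree x := by
    have := hdeg x
    rw [ndeg_eq_degree] at this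
    exact_mod_cast (by linarith : (Fintype.card V + 2 : ℝ) ≤ 2 * G.degree x)
  obtain ⟨T, hC, hnd, hspan⟩ :=
    exists_spanning_cycle_chain_through_edge (H := G ⊔ edge u v) (u := u) (v := v)
      (fun x => (hdegG x).trans (Nat.mul_le_mul_left 2 (degree_le_of_le le_sup_left)))
      (by simp [edge_adj, huv.symm])
  refine exists_isHamiltonian_of_cycle_chain_sup_edge ?_ hC hnd hspan
  -- `T = []` would leave only two vertices, while the degree bound forces at least four
  rintro rfl
  have hsub : (univ : Finset V) ⊆ {v, u} := fun x _ => by simpa using hspan x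
  have := (card_le_card hsub).trans card_le_two
  rw [card_univ] at this
  have := hdegG u
  have := G.degree_lt_card_verts u
  omega

/-- If every vertex of a graph on `n ≥ 4` vertices has degree at least `n/2 + 1`, then any two
distinct vertices are joined by a Hamiltonian path. -/
theorem dirac_hamiltonian_path {V : Type*} [Fintype V] [DecidableEq V] (G : SimpleGraph V)
    (hn : 4 ≤ Fintype.card V)
    (hdeg : ∀ v : V, (Fintype.card V : ℝ) / 2 + 1 ≤ (ndeg G v : ℝ))
    (u v : V) (huv : u ≠ v) :
    ∃ p : G.Walk u v, p.IsHamiltonian :=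
  dirac_hamiltonian_path_general G hdeg u v huv
end

section
/- Let G = G[X1, X2] be a simple bipartite graph on n ≥ 4 vertices with parts X1 and X2 such that |X1| > |X2| + 1 and every vertex in X2 has degree at least n/2 + 1. Then any two distinct vertices x1, x2 ∈ X1 with d(x1) ≥ 1 and d(x2) ≥ 2 are joined by a path in G which visits every vertex of X2. -/
open SimpleGraph

/-! Every vertex of `X₂` has all its neighbours in `X₁`, and at least `n/2 + 1` of them, while
`|X₁| ≤ n - |X₂|`; hence any two vertices of `X₂` have at least `|X₂| + 2` common neighbours.
Pick neighbours `v₁ ≠ v₂` of `x₁` and `x₂`, and thread a path from `v₁` to `v₂` through all of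
`X₂`, joining consecutive vertices by a common neighbour chosen greedily: when the `i`-th
connector is chosen, only `x₁`, `x₂` and the `i - 1` connectors already used are excluded. -/

open Finset

theorem Finset.disjoint_erase_insert_insert {α : Type*} [DecidableEq α] {T F : Finset α}
    {a u : α} (hTF : Disjoint T F) (hu : u ∉ T) :
    Disjoint (T.erase a) (insert a (insert u F)) := by
  refine Finset.disjoint_left.2 fun x hx => ?_
  simp only [mem_insert, not_or]
  exact ⟨ne_of_mem_erase hx, fun h => hu (h ▸ mem_of_mem_erase hx),
    Finset.disjoint_left.1 hTF (mem_of_mem_erase hx)⟩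

theorem ndeg_eq_ncard_neighborSet {V : Type*} (G : SimpleGraph V) (v : V) :
    ndeg G v = (G.neighborSet v).ncard := rfl

namespace SimpleGraph

variable {V : Type*} {G : SimpleGraph V}

theorem card_erase_le_ncard_commonNeighbors_sdiff_add_one [DecidableEq V] {T F : Finset V}
    {a u v w : V} (ha : a ∈ T) (h : #T ≤ (G.commonNeighbors v w \ ↑(T ∪ F)).ncard + 1) :
    #(T.erase a) ≤
      (G.commonNeighbors v w \ ↑(T.erase a ∪ insert a (insert u F))).ncard + 1 := by
  have hunion : T.erase a ∪ insert a (insert u F) = insert u (T ∪ F) := by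
    ext x
    by_cases hxa : x = a <;> simp [hxa, ha]
  rw [hunion, coe_insert, Set.insert_eq, Set.union_comm, ← Set.sdiff_sdiff,
    card_erase_of_mem ha]
  have := Set.pred_ncard_le_ncard_sdiff_singleton (G.commonNeighbors v w \ ↑(T ∪ F)) u
  omega

theorem exists_isPath_covering_of_commonNeighbors [DecidableEq V] {T F : Finset V}
    (hTF : Disjoint T F)
    (hcommon : ∀ v ∈ T, ∀ w ∈ T, v ≠ w → #T ≤ (G.commonNeighbors v w \ ↑(T ∪ F)).ncard + 1)
    {a b : V} (ha : a ∈ T) (hb : b ∈ T) (hab : a ≠ b) :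
    ∃ p : G.Walk a b, p.IsPath ∧ (∀ v ∈ T, v ∈ p.support) ∧ ∀ v ∈ p.support, v ∉ F := by
  obtain ⟨n, hn⟩ : ∃ n, #T = n := ⟨_, rfl⟩
  induction n generalizing T F a with
  | zero => exact absurd hn (card_ne_zero_of_mem ha)
  | succ n ih =>
    have hT : 2 ≤ #T := one_lt_card.2 ⟨a, ha, b, hb, hab⟩
    -- `c` is the successor of `a` in `T`; the tail must avoid the connector `u` chosen later.
    obtain ⟨c, hcT, hac, htail⟩ : ∃ c ∈ T, a ≠ c ∧ ∀ u ∉ T, ∃ q : G.Walk c b, q.IsPath ∧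
        (∀ v ∈ T.erase a, v ∈ q.support) ∧ ∀ v ∈ q.support, v ≠ a ∧ v ≠ u ∧ v ∉ F := by
      have hbT' : b ∈ T.erase a := mem_erase.2 ⟨hab.symm, hb⟩
      by_cases hT2 : #T = 2
      · refine ⟨b, hb, hab, fun u hu => ⟨.nil, .nil, fun v hv => ?_, ?_⟩⟩
        · have := card_le_one.1 (by rw [card_erase_of_mem ha]; omega) v hv b hbT'
          simp [this]
        simp only [Walk.support_nil, List.mem_singleton, forall_eq]
        exact ⟨hab.symm, fun h => hu (h ▸ hb), Finset.disjoint_left.1 hTF hb⟩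
      obtain ⟨c, hcT', hcb⟩ :=
        exists_mem_ne (s := T.erase a) (by rw [card_erase_of_mem ha]; omega) b
      obtain ⟨hca, hcT⟩ := mem_erase.1 hcT'
      refine ⟨c, hcT, hca.symm, fun u hu => ?_⟩
      obtain ⟨q, hq, hqT, hqF⟩ := ih (disjoint_erase_insert_insert hTF hu)
        (fun v hv w hw hvw => card_erase_le_ncard_commonNeighbors_sdiff_add_one ha
          (hcommon v (mem_of_mem_erase hv) w (mem_of_mem_erase hw) hvw))
        hcT' hbT' hcb
        (by rw [card_erase_of_mem ha]; omega)
      exact ⟨q, hq, hqT, fun v hv => by simpa [not_or] using hqF v hv⟩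
    obtain ⟨u, ⟨hau, hcu⟩, huTF⟩ := Set.nonempty_of_ncard_ne_zero
      (s := G.commonNeighbors a c \ ↑(T ∪ F)) (by have := hcommon a ha c hcT hac; omega)
    rw [mem_neighborSet] at hau hcu
    rw [Finset.mem_coe, Finset.mem_union, not_or] at huTF
    obtain ⟨q, hq, hqT, hqF⟩ := htail u huTF.1
    refine ⟨.cons hau (.cons hcu.symm q), ?_, ?_, ?_⟩
    · simp only [Walk.cons_isPath_iff, Walk.support_cons, List.mem_cons, not_or]
      exact ⟨⟨hq, fun h => (hqF u h).2.1 rfl⟩, fun h => huTF.1 (h ▸ ha),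
        fun h => (hqF a h).1 rfl⟩
    · intro v hv
      by_cases hva : v = a
      · simp [hva]
      · simp [hqT v (mem_erase.2 ⟨hva, hv⟩)]
    · simp only [Walk.support_cons, List.mem_cons]
      rintro v (rfl | rfl | hv)
      · exact Finset.disjoint_left.1 hTF ha
      · exact huTF.2
      · exact (hqF v hv).2.2

theorem ncard_add_ncard_le_ncard_commonNeighbors_add [Finite V] {S : Set V} {v w : V}
    (hv : G.neighborSet v ⊆ S) (hw : G.neighborSet w ⊆ S) :
    (G.neighborSet v).ncard + (G.neighborSet w).ncard ≤
      (G.commonNeighbors v w).ncard + S.ncard := by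
  rw [← Set.ncard_inter_add_ncard_union, commonNeighbors_eq]
  exact Nat.add_le_add_left (Set.ncard_le_ncard (Set.union_subset hv hw)) _

section Bipartite

variable [Fintype V] {X₁ X₂ : Finset V}

theorem IsBipartiteWith.card_add_two_le_ncard_commonNeighbors (hG : G.IsBipartiteWith X₁ X₂)
    (hdeg : ∀ v ∈ X₂, Fintype.card V + 2 ≤ 2 * (G.neighborSet v).ncard) {v w : V}
    (hv : v ∈ X₂) (hw : w ∈ X₂) : #X₂ + 2 ≤ (G.commonNeighbors v w).ncard := by
  classical
  have hX : #X₁ + #X₂ ≤ Fintype.card V := by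
    rw [← card_union_of_disjoint (disjoint_coe.1 hG.disjoint)]
    exact card_le_univ _
  have := ncard_add_ncard_le_ncard_commonNeighbors_add
    (isBipartiteWith_neighborSet_subset' hG hv) (isBipartiteWith_neighborSet_subset' hG hw)
  rw [Set.ncard_coe_finset] at this
  have := hdeg v hv
  have := hdeg w hw
  omega

theorem IsBipartiteWith.card_add_two_le_ncard_commonNeighbors_sdiff_add [DecidableEq V]
    (hG : G.IsBipartiteWith X₁ X₂)
    (hdeg : ∀ v ∈ X₂, Fintype.card V + 2 ≤ 2 * (G.neighborSet v).ncard) (F : Finset V)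
    {v w : V} (hv : v ∈ X₂) (hw : w ∈ X₂) :
    #X₂ + 2 ≤ (G.commonNeighbors v w \ ↑(X₂ ∪ F)).ncard + #F := by
  have hcommonX₂ : Disjoint (G.commonNeighbors v w) X₂ :=
    (isBipartiteWith_neighborSet_disjoint' hG hv).mono_left Set.inter_subset_left
  rw [coe_union, ← Set.sdiff_sdiff, hcommonX₂.sdiff_eq_left, ← Set.ncard_coe_finset F]
  exact (hG.card_add_two_le_ncard_commonNeighbors hdeg hv hw).trans
    (Set.ncard_le_ncard_sdiff_add_ncard _ _)

end Bipartite

end SimpleGraph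

theorem bipartite_spanning_path_general {V : Type*} [Fintype V] (G : SimpleGraph V) (X₁ X₂ : Finset V)
    (hdisj : Disjoint X₁ X₂)
    (hbip : ∀ u v : V, G.Adj u v → (u ∈ X₁ ∧ v ∈ X₂) ∨ (u ∈ X₂ ∧ v ∈ X₁))
    (hdeg : ∀ v ∈ X₂, (Fintype.card V : ℝ) / 2 + 1 ≤ (ndeg G v : ℝ))
    (x₁ x₂ : V) (hx₁ : x₁ ∈ X₁) (hx₂ : x₂ ∈ X₁) (hne : x₁ ≠ x₂)
    (hd₁ : 1 ≤ ndeg G x₁) (hd₂ : 2 ≤ ndeg G x₂) :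
    ∃ p : G.Walk x₁ x₂, p.IsPath ∧ ∀ v ∈ X₂, v ∈ p.support := by
  classical
  have hG : G.IsBipartiteWith X₁ X₂ := ⟨disjoint_coe.2 hdisj, hbip⟩
  have hdeg' (v) (hv : v ∈ X₂) : Fintype.card V + 2 ≤ 2 * (G.neighborSet v).ncard := by
    have := hdeg v hv
    rw [ndeg_eq_ncard_neighborSet] at this
    exact_mod_cast (by linarith : (Fintype.card V : ℝ) + 2 ≤ 2 * (G.neighborSet v).ncard)
  have hcommon : ∀ v ∈ X₂, ∀ w ∈ X₂, v ≠ w →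
      #X₂ ≤ (G.commonNeighbors v w \ ↑(X₂ ∪ {x₁, x₂})).ncard + 1 := fun v hv w hw _ => by
    have := hG.card_add_two_le_ncard_commonNeighbors_sdiff_add hdeg' {x₁, x₂} hv hw
    rw [card_pair hne] at this
    omega
  rw [ndeg_eq_ncard_neighborSet] at hd₁ hd₂
  obtain ⟨v₁, hv₁⟩ := Set.nonempty_of_ncard_ne_zero (s := G.neighborSet x₁) (by omega)
  obtain ⟨v₂, hv₂, hv₂₁⟩ := Set.exists_ne_of_one_lt_ncard (s := G.neighborSet x₂) hd₂ v₁
  rw [mem_neighborSet] at hv₁ hv₂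
  obtain ⟨p, hp, hpX₂, hpF⟩ := exists_isPath_covering_of_commonNeighbors
    (disjoint_insert_right.2 ⟨Finset.disjoint_left.1 hdisj hx₁,
      disjoint_singleton_right.2 (Finset.disjoint_left.1 hdisj hx₂)⟩) hcommon
    (hG.mem_of_mem_adj hx₁ hv₁) (hG.mem_of_mem_adj hx₂ hv₂) hv₂₁.symm
  refine ⟨.cons hv₁ (p.concat hv₂.symm), ?_, fun v hv => ?_⟩
  · refine (Walk.cons_isPath_iff _ _).2 ⟨hp.concat (fun h => hpF x₂ h (by simp)) _, ?_⟩
    simpa [Walk.support_concat, hne] using fun h => hpF x₁ h (by simp)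
  · simp [Walk.support_concat, hpX₂ v hv]

/-- In a bipartite graph on `n ≥ 4` vertices with `|X₁| > |X₂| + 1` in which every vertex of
`X₂` has degree at least `n/2 + 1`, any two distinct vertices `x₁, x₂ ∈ X₁` with `d(x₁) ≥ 1`
and `d(x₂) ≥ 2` are joined by a path visiting every vertex of `X₂`. -/
theorem bipartite_spanning_path {V : Type*} [Fintype V] (G : SimpleGraph V) (X₁ X₂ : Finset V)
    (hdisj : Disjoint X₁ X₂) (hcover : ∀ v : V, v ∈ X₁ ∨ v ∈ X₂)
    (hbip : ∀ u v : V, G.Adj u v → (u ∈ X₁ ∧ v ∈ X₂) ∨ (u ∈ X₂ ∧ v ∈ X₁))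
    (hn : 4 ≤ Fintype.card V)
    (hsize : X₂.card + 1 < X₁.card)
    (hdeg : ∀ v ∈ X₂, (Fintype.card V : ℝ) / 2 + 1 ≤ (ndeg G v : ℝ))
    (x₁ x₂ : V) (hx₁ : x₁ ∈ X₁) (hx₂ : x₂ ∈ X₁) (hne : x₁ ≠ x₂)
    (hd₁ : 1 ≤ ndeg G x₁) (hd₂ : 2 ≤ ndeg G x₂) :
    ∃ p : G.Walk x₁ x₂, p.IsPath ∧ ∀ v ∈ X₂, v ∈ p.support :=
  bipartite_spanning_path_general G X₁ X₂ hdisj hbip hdeg x₁ x₂ hx₁ hx₂ hne hd₁ hd₂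
end

section
/- For every η with 0 < η < 1/3 and every K ≥ 1/η, the following holds: if G is a (1 − η)-complete graph on K vertices whose edges are each coloured red or blue, then some monochromatic component of G has at least (1 − 3η)K vertices; that is, there is a colour such that some connected component of the spanning subgraph of edges of that colour contains at least (1 − 3η)K vertices. -/
open SimpleGraph

/-!
Fix a vertex `v` with red and blue components `C₁`, `C₂`; their union contains `v` and all its
neighbours. If `C₂ ⊆ C₁`, then `C₁` alone has more than `deg v` vertices. Otherwise pick
`b ∈ C₂ \ C₁`: an edge from `b` to `C₁ \ C₂` would merge components, so `b` misses all of
`C₁ \ C₂`, which therefore has at most `N - 1 - deg b` vertices, and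
`|C₂| ≥ deg v + 1 - (N - 1 - deg b) ≥ 2(1 - η)(N - 1) + 2 - N ≥ (1 - 3η)N`.
-/

namespace SimpleGraph

variable {V : Type*}

theorem ndeg_add_one_le_ncard [Finite V] (G : SimpleGraph V) {v : V} {T : Set V} (hv : v ∈ T)
    (hT : G.neighborSet v ⊆ T) : ndeg G v + 1 ≤ T.ncard := by
  have hdisj : Disjoint (G.neighborSet v) {v} :=
    Set.disjoint_singleton_right.mpr G.notMem_neighborSet_self
  calc ndeg G v + 1 = (G.neighborSet v ∪ {v}).ncard := by
        rw [Set.ncard_union_eq hdisj, Set.ncard_singleton]; rfl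
    _ ≤ T.ncard := Set.ncard_le_ncard (Set.union_subset hT (Set.singleton_subset_iff.mpr hv))

theorem ndeg_add_ncard_add_one_le_card [Finite V] (G : SimpleGraph V) {w : V} {S : Set V}
    (hw : w ∉ S) (hS : ∀ u ∈ S, ¬ G.Adj w u) : ndeg G w + S.ncard + 1 ≤ Nat.card V := by
  have h := G.ndeg_add_one_le_ncard (T := Sᶜ) hw fun u hu huS => hS u huS hu
  have := Set.ncard_add_ncard_compl S
  omega

variable {G₁ G₂ : SimpleGraph V}

theorem neighborSet_sup_subset_reachable (v : V) :
    (G₁ ⊔ G₂).neighborSet v ⊆ {u | G₁.Reachable v u} ∪ {u | G₂.Reachable v u} := by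
  rintro u (h | h)
  exacts [Or.inl h.reachable, Or.inr h.reachable]

theorem not_sup_adj_of_reachable_of_not_reachable {v a b : V}
    (ha₁ : G₁.Reachable v a) (ha₂ : ¬ G₂.Reachable v a)
    (hb₂ : G₂.Reachable v b) (hb₁ : ¬ G₁.Reachable v b) : ¬ (G₁ ⊔ G₂).Adj b a := by
  rintro (h | h)
  exacts [hb₁ (ha₁.trans h.symm.reachable), ha₂ (hb₂.trans h.reachable)]

theorem exists_ndeg_add_ndeg_le_ncard_reachable [Finite V] (v : V) :
    ∃ b, ndeg (G₁ ⊔ G₂) v + ndeg (G₁ ⊔ G₂) b + 2 ≤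
          {u | G₁.Reachable v u}.ncard + Nat.card V ∨
        ndeg (G₁ ⊔ G₂) v + ndeg (G₁ ⊔ G₂) b + 2 ≤
          {u | G₂.Reachable v u}.ncard + Nat.card V := by
  set C₁ := {u | G₁.Reachable v u}
  set C₂ := {u | G₂.Reachable v u}
  have hv : ndeg (G₁ ⊔ G₂) v + 1 ≤ (C₁ ∪ C₂).ncard :=
    ndeg_add_one_le_ncard _ (Or.inl (Reachable.refl v)) (neighborSet_sup_subset_reachable v)
  by_cases hC : C₂ ⊆ C₁
  · refine ⟨v, Or.inl ?_⟩
    have hle : ndeg (G₁ ⊔ G₂) v + 1 ≤ Nat.card V :=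
      (ndeg_add_one_le_ncard _ (Set.mem_univ v) (Set.subset_univ _)).trans_eq (Set.ncard_univ V)
    rw [Set.union_eq_self_of_subset_right hC] at hv
    omega
  · obtain ⟨b, hb₂, hb₁⟩ := Set.not_subset.mp hC
    refine ⟨b, Or.inr ?_⟩
    have hb : ndeg (G₁ ⊔ G₂) b + (C₁ \ C₂).ncard + 1 ≤ Nat.card V :=
      ndeg_add_ncard_add_one_le_card _ (fun h => hb₁ h.1)
        fun a ha => not_sup_adj_of_reachable_of_not_reachable ha.1 ha.2 hb₂ hb₁
    have hunion : (C₁ ∪ C₂).ncard ≤ C₂.ncard + (C₁ \ C₂).ncard := by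
      rw [Set.union_comm, ← Set.union_sdiff_self]
      exact Set.ncard_union_le _ _
    omega

end SimpleGraph

theorem large_monochromatic_component_general (η : ℝ) (hη0 : 0 < η) :
    ∀ (V : Type) [Fintype V], ∀ G G₁ G₂ : SimpleGraph V,
      1 / η ≤ (Fintype.card V : ℝ) →
      G₁ ⊔ G₂ = G →
      (∀ v : V, (1 - η) * ((Fintype.card V : ℝ) - 1) ≤ (ndeg G v : ℝ)) →
      (∃ v : V, (1 - 3 * η) * (Fintype.card V : ℝ) ≤ ({u : V | G₁.Reachable v u}.ncard : ℝ)) ∨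
      (∃ v : V, (1 - 3 * η) * (Fintype.card V : ℝ) ≤ ({u : V | G₂.Reachable v u}.ncard : ℝ)) := by
  intro V _ G G₁ G₂ hN hG hdeg
  subst hG
  have hN0 : (0 : ℝ) < Fintype.card V := lt_of_lt_of_le (by positivity) hN
  obtain ⟨v⟩ := Fintype.card_pos_iff.mp (by exact_mod_cast hN0)
  obtain ⟨b, hb⟩ := exists_ndeg_add_ndeg_le_ncard_reachable (G₁ := G₁) (G₂ := G₂) v
  have large {c : ℕ} (hc : ndeg (G₁ ⊔ G₂) v + ndeg (G₁ ⊔ G₂) b + 2 ≤ c + Nat.card V) :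
      (1 - 3 * η) * (Fintype.card V : ℝ) ≤ c := by
    rw [Nat.card_eq_fintype_card] at hc
    have hc' : (ndeg (G₁ ⊔ G₂) v : ℝ) + ndeg (G₁ ⊔ G₂) b + 2 ≤ c + Fintype.card V := by
      exact_mod_cast hc
    linarith [hdeg v, hdeg b, mul_pos hη0 hN0]
  exact hb.imp (fun h => ⟨v, large h⟩) fun h => ⟨v, large h⟩

/-- Any red/blue colouring of a `(1-η)`-complete graph on `K ≥ 1/η` vertices has a
monochromatic component on at least `(1-3η)K` vertices. -/
theorem large_monochromatic_component (η : ℝ) (hη0 : 0 < η) (hη : η < 1 / 3) :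
    ∀ (V : Type) [Fintype V], ∀ G G₁ G₂ : SimpleGraph V,
      1 / η ≤ (Fintype.card V : ℝ) →
      G₁ ⊔ G₂ = G →
      (∀ v : V, (1 - η) * ((Fintype.card V : ℝ) - 1) ≤ (ndeg G v : ℝ)) →
      (∃ v : V, (1 - 3 * η) * (Fintype.card V : ℝ) ≤ ({u : V | G₁.Reachable v u}.ncard : ℝ)) ∨
      (∃ v : V, (1 - 3 * η) * (Fintype.card V : ℝ) ≤ ({u : V | G₂.Reachable v u}.ncard : ℝ)) :=
  large_monochromatic_component_general η hη0
end

section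
/- For every η with 0 < η < 1/20 and every K ≥ 1/η, the following holds. Let G be a (1 − η)-complete graph on K vertices with vertex set V, let W ⊆ V satisfy |W| ≥ 4η^{1/2}K and |V \ W| ≥ 4η^{1/2}K, and let G_W be the graph obtained from G by removing all edges contained entirely within W. Suppose every edge of G_W is coloured red or blue, and define W_r to be the set of w ∈ W having red edges to all but at most 3η^{1/2}K vertices of V \ W, and W_b to be the set of w ∈ W having blue edges to all but at most 3η^{1/2}K vertices of V \ W. Then at least one of the following holds: (i) some monochromatic component of G_W has at least (1 − 2η^{1/2})K vertices; (ii) both W_r and W_b are nonempty. -/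
open SimpleGraph

/-!
Every vertex of `G` has at most `m = ηK` non-neighbours. If, say, no vertex of `W` is
red-dominant, then every `w ∈ W` has more than `2m` blue neighbours outside `W`. If `W` lies in a
single blue component `C` that is not huge, every `G`-edge between `C` and its complement is red;
if two vertices of `W` lie in different blue components, every `G`-edge between their blue
neighbourhoods `N₁`, `N₂` outside `W` is red, and every other vertex sends a red edge into
`N₁ ∪ N₂`. In both cases the red edges between two disjoint sets of size `> 2m` are connected,
since any two vertices on one side have a common neighbour on the other, so the red graph is
connected.
-/

theorem Set.inter_nonempty_of_ncard_lt_ncard_add_ncard {α : Type*} [Finite α] {S X Y : Set α}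
    (hX : X ⊆ S) (hY : Y ⊆ S) (h : S.ncard < X.ncard + Y.ncard) : (X ∩ Y).Nonempty := by
  by_contra hXY
  rw [Set.not_nonempty_iff_eq_empty] at hXY
  have := Set.ncard_union_eq (Set.disjoint_iff_inter_eq_empty.2 hXY)
  have := Set.ncard_le_ncard (Set.union_subset hX hY)
  omega

namespace SimpleGraph

variable {V : Type*} {G H : SimpleGraph V} {m : ℝ}

theorem ncard_compl_neighborSet_le [Fintype V] {η : ℝ} {v : V} (hη : 0 ≤ η)
    (hdeg : (1 - η) * ((Fintype.card V : ℝ) - 1) ≤ (ndeg G v : ℝ)) :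
    ((Gᶜ.neighborSet v).ncard : ℝ) ≤ η * Fintype.card V := by
  have hsplit := Set.ncard_union_eq (G.compl_neighborSet_disjoint v)
  rw [G.neighborSet_union_compl_neighborSet_eq] at hsplit
  have hcompl := Set.ncard_add_ncard_compl ({v} : Set V)
  rw [Set.ncard_singleton, Nat.card_eq_fintype_card] at hcompl
  have hdeg_eq : ndeg G v = (G.neighborSet v).ncard := rfl
  have hcount : (ndeg G v : ℝ) + (Gᶜ.neighborSet v).ncard + 1 = Fintype.card V := by
    rw [hdeg_eq]; exact_mod_cast (by omega)
  have hn : (1 : ℝ) ≤ Fintype.card V := by exact_mod_cast (by omega : 1 ≤ Fintype.card V)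
  nlinarith

section FewMissingEdges

variable [Finite V] (hmiss : ∀ v, ((Gᶜ.neighborSet v).ncard : ℝ) ≤ m)
include hmiss

theorem ncard_sub_le_ncard_adj {v : V} {S : Set V} (hv : v ∉ S)
    (hGH : ∀ u ∈ S, G.Adj v u → H.Adj v u) :
    (S.ncard : ℝ) - m ≤ ({u | u ∈ S ∧ H.Adj v u}.ncard : ℝ) := by
  have hcover : S ⊆ {u | u ∈ S ∧ H.Adj v u} ∪ Gᶜ.neighborSet v := by
    intro u hu
    by_cases hadj : G.Adj v u
    · exact Or.inl ⟨hu, hGH u hu hadj⟩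
    · exact Or.inr ((compl_adj G v u).2 ⟨fun h => hv (h ▸ hu), hadj⟩)
  have hle :
      (S.ncard : ℝ) ≤ {u | u ∈ S ∧ H.Adj v u}.ncard + (Gᶜ.neighborSet v).ncard := by
    exact_mod_cast (Set.ncard_le_ncard hcover).trans (Set.ncard_union_le _ _)
  linarith [hmiss v]

theorem exists_adj_mem {v : V} {S : Set V} (hv : v ∉ S) (hS : m < S.ncard)
    (hGH : ∀ u ∈ S, G.Adj v u → H.Adj v u) : ∃ u ∈ S, H.Adj v u := by
  have hpos : (0 : ℝ) < ({u | u ∈ S ∧ H.Adj v u}.ncard : ℝ) := by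
    linarith [ncard_sub_le_ncard_adj hmiss hv hGH]
  exact (Set.ncard_pos (Set.toFinite _)).1 (by exact_mod_cast hpos)

theorem exists_common_adj {v w : V} {S : Set V} (hv : v ∉ S) (hw : w ∉ S) (hS : 2 * m < S.ncard)
    (hGHv : ∀ u ∈ S, G.Adj v u → H.Adj v u) (hGHw : ∀ u ∈ S, G.Adj w u → H.Adj w u) :
    ∃ u ∈ S, H.Adj v u ∧ H.Adj w u := by
  have hcount : (S.ncard : ℝ) <
      ({u | u ∈ S ∧ H.Adj v u}.ncard : ℝ) + ({u | u ∈ S ∧ H.Adj w u}.ncard : ℝ) := by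
    linarith [ncard_sub_le_ncard_adj hmiss hv hGHv, ncard_sub_le_ncard_adj hmiss hw hGHw]
  obtain ⟨u, ⟨hu, hvu⟩, -, hwu⟩ := Set.inter_nonempty_of_ncard_lt_ncard_add_ncard
    (X := {u | u ∈ S ∧ H.Adj v u}) (Y := {u | u ∈ S ∧ H.Adj w u}) (fun _ h => h.1)
    (fun _ h => h.1) (by exact_mod_cast hcount)
  exact ⟨u, hu, hvu, hwu⟩

theorem reachable_of_forall_adj_imp_adj {X Y : Set V} (hXY : Disjoint X Y) (hX : m < X.ncard)
    (hY : 2 * m < Y.ncard) (hcross : ∀ x ∈ X, ∀ y ∈ Y, G.Adj x y → H.Adj x y) {u v : V}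
    (hu : u ∈ X ∪ Y) (hv : v ∈ X ∪ Y) : H.Reachable u v := by
  have hXX : ∀ x ∈ X, ∀ x' ∈ X, H.Reachable x x' := by
    intro x hx x' hx'
    obtain ⟨y, -, hxy, hx'y⟩ := exists_common_adj hmiss (hXY.notMem_of_mem_left hx)
      (hXY.notMem_of_mem_left hx') hY (hcross x hx) (hcross x' hx')
    exact hxy.reachable.trans hx'y.symm.reachable
  have hroot : ∀ w ∈ X ∪ Y, ∃ x ∈ X, H.Reachable x w := by
    rintro w (hw | hw)
    · exact ⟨w, hw, .refl w⟩
    · obtain ⟨x, hx, hwx⟩ := exists_adj_mem hmiss (hXY.notMem_of_mem_right hw) hX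
        fun x hx h => (hcross x hx w hw h.symm).symm
      exact ⟨x, hx, hwx.symm.reachable⟩
  obtain ⟨x, hx, hxu⟩ := hroot u hu
  obtain ⟨x', hx', hx'v⟩ := hroot v hv
  exact hxu.symm.trans ((hXX x hx x' hx').trans hx'v)

variable {A B : SimpleGraph V} {W : Set V}
  (hcol : ∀ u v, G.Adj u v → ¬(u ∈ W ∧ v ∈ W) → A.Adj u v ∨ B.Adj u v)
include hcol

theorem preconnected_of_ncard_reachable_lt [Fintype V] {t : ℝ} (hmt : m ≤ t)
    (hW : 2 * m < W.ncard) {w₀ : V} (hWC : W ⊆ {u | A.Reachable w₀ u})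
    (hsmall : ({u | A.Reachable w₀ u}.ncard : ℝ) < Fintype.card V - t) : B.Preconnected := by
  set C := {u | A.Reachable w₀ u}
  have hsplit := Set.ncard_add_ncard_compl C
  rw [Nat.card_eq_fintype_card] at hsplit
  have hCc : m < (Cᶜ.ncard : ℝ) := by
    have : (C.ncard : ℝ) + Cᶜ.ncard = Fintype.card V := by exact_mod_cast hsplit
    linarith
  have hC : 2 * m < (C.ncard : ℝ) := hW.trans_le (by exact_mod_cast Set.ncard_le_ncard hWC)
  have hcross : ∀ x ∈ Cᶜ, ∀ y ∈ C, G.Adj x y → B.Adj x y := fun x hx y hy hxy =>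
    (hcol x y hxy fun h => hx (hWC h.1)).resolve_left fun hA => hx (hy.trans hA.symm.reachable)
  intro u v
  exact reachable_of_forall_adj_imp_adj hmiss disjoint_compl_left hCc hC hcross
    (Set.compl_union_self C ▸ Set.mem_univ u) (Set.compl_union_self C ▸ Set.mem_univ v)

theorem preconnected_of_not_reachable {w₁ w₂ : V} (hsep : ¬A.Reachable w₁ w₂)
    (hw₁ : m < ({u | u ∉ W ∧ A.Adj w₁ u}.ncard : ℝ))
    (hw₂ : 2 * m < ({u | u ∉ W ∧ A.Adj w₂ u}.ncard : ℝ)) : B.Preconnected := by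
  set N₁ := {u | u ∉ W ∧ A.Adj w₁ u}
  set N₂ := {u | u ∉ W ∧ A.Adj w₂ u}
  have hsep' : ∀ x ∈ N₁, ∀ y ∈ N₂, ¬A.Reachable x y := fun x hx y hy hxy =>
    hsep (hx.2.reachable.trans (hxy.trans hy.2.reachable.symm))
  have hcross : ∀ x ∈ N₁, ∀ y ∈ N₂, G.Adj x y → B.Adj x y := fun x hx y hy hxy =>
    (hcol x y hxy fun h => hx.1 h.1).resolve_left fun hA => hsep' x hx y hy hA.reachable
  have hdisj : Disjoint N₁ N₂ :=
    Set.disjoint_left.2 fun x hx₁ hx₂ => hsep' x hx₁ x hx₂ (.refl x)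
  have hanchor : ∀ v, ∃ a ∈ N₁ ∪ N₂, B.Reachable v a := by
    intro v
    by_cases hv : v ∈ N₁ ∪ N₂
    · exact ⟨v, hv, .refl v⟩
    obtain ⟨x, hx, hvx⟩ := exists_adj_mem hmiss (fun h => hv (.inl h)) hw₁ fun _ _ h => h
    obtain ⟨y, hy, hvy⟩ := exists_adj_mem hmiss (fun h => hv (.inr h)) (by linarith)
      fun _ _ h => h
    rcases hcol v x hvx fun h => hx.1 h.2 with hAx | hBx
    · rcases hcol v y hvy fun h => hy.1 h.2 with hAy | hBy
      · exact (hsep' x hx y hy (hAx.symm.reachable.trans hAy.reachable)).elim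
      · exact ⟨y, .inr hy, hBy.reachable⟩
    · exact ⟨x, .inl hx, hBx.reachable⟩
  intro u v
  obtain ⟨a, ha, hua⟩ := hanchor u
  obtain ⟨b, hb, hvb⟩ := hanchor v
  exact hua.trans ((reachable_of_forall_adj_imp_adj hmiss hdisj hw₁ hw₂ hcross ha hb).trans
    hvb.symm)

theorem ncard_not_adj_sub_le_ncard_adj {w : V} (hw : w ∈ W) :
    ({u | u ∉ W ∧ ¬B.Adj w u}.ncard : ℝ) - m ≤
      ({u | u ∉ W ∧ A.Adj w u}.ncard : ℝ) := by
  set T := {u | u ∉ W ∧ ¬B.Adj w u}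
  have hcount := ncard_sub_le_ncard_adj hmiss (S := T) (fun h => h.1 hw)
    fun u hu hwu => (hcol w u hwu fun h => hu.1 h.2).resolve_right hu.2
  have hsub : {u | u ∈ T ∧ A.Adj w u} ⊆ {u | u ∉ W ∧ A.Adj w u} :=
    fun u hu => ⟨hu.1.1, hu.2⟩
  have hmono : ({u | u ∈ T ∧ A.Adj w u}.ncard : ℝ) ≤ ({u | u ∉ W ∧ A.Adj w u}.ncard : ℝ) :=
    mod_cast Set.ncard_le_ncard hsub
  linarith

theorem exists_large_component [Fintype V] {t : ℝ} (hm : 0 ≤ m) (hmt : m ≤ t)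
    (hW : 2 * m < W.ncard)
    (hnd : ∀ w ∈ W, 3 * m < ({u | u ∉ W ∧ ¬B.Adj w u}.ncard : ℝ)) :
    (∃ v, (Fintype.card V : ℝ) - t ≤ ({u | A.Reachable v u}.ncard : ℝ)) ∨
      (∃ v, (Fintype.card V : ℝ) - t ≤ ({u | B.Reachable v u}.ncard : ℝ)) := by
  have hWA (w : V) (hw : w ∈ W) : 2 * m < ({u | u ∉ W ∧ A.Adj w u}.ncard : ℝ) := by
    linarith [hnd w hw, ncard_not_adj_sub_le_ncard_adj hmiss hcol hw]
  obtain ⟨w₀, hw₀⟩ : W.Nonempty :=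
    (Set.ncard_pos (Set.toFinite _)).1 (by exact_mod_cast (by linarith : (0 : ℝ) < W.ncard))
  suffices (∃ v, (Fintype.card V : ℝ) - t ≤ ({u | A.Reachable v u}.ncard : ℝ)) ∨
      B.Preconnected by
    refine this.imp_right fun hB => ⟨w₀, ?_⟩
    have hall : {u | B.Reachable w₀ u} = Set.univ := Set.eq_univ_of_forall (hB w₀)
    rw [hall, Set.ncard_univ, Nat.card_eq_fintype_card]
    linarith
  by_cases hconn : ∀ w ∈ W, ∀ w' ∈ W, A.Reachable w w'
  · by_cases hbig : (Fintype.card V : ℝ) - t ≤ ({u | A.Reachable w₀ u}.ncard : ℝ)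
    · exact .inl ⟨w₀, hbig⟩
    · exact .inr (preconnected_of_ncard_reachable_lt hmiss hcol hmt hW
        (fun w hw => hconn w₀ hw₀ w hw) (not_le.1 hbig))
  · push Not at hconn
    obtain ⟨w₁, hw₁, w₂, hw₂, hsep⟩ := hconn
    exact .inr (preconnected_of_not_reachable hmiss hcol hsep (by linarith [hWA w₁ hw₁])
      (hWA w₂ hw₂))

end FewMissingEdges

end SimpleGraph

/-- Structure of two-coloured almost-complete graphs with one hole: either there is a huge
monochromatic component, or `W` contains both a "red-dominant" and a "blue-dominant" vertex. -/
theorem one_hole_structure (η : ℝ) (hη0 : 0 < η) (hη : η < 1 / 20) :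
    ∀ (V : Type) [Fintype V] [DecidableEq V], ∀ (G : SimpleGraph V) (W : Finset V),
      1 / η ≤ (Fintype.card V : ℝ) →
      (∀ v : V, (1 - η) * ((Fintype.card V : ℝ) - 1) ≤ (ndeg G v : ℝ)) →
      4 * η ^ ((1 : ℝ) / 2) * (Fintype.card V : ℝ) ≤ (W.card : ℝ) →
      4 * η ^ ((1 : ℝ) / 2) * (Fintype.card V : ℝ) ≤ ((Wᶜ : Finset V).card : ℝ) →
      ∀ GW R B : SimpleGraph V,
        (∀ u v : V, GW.Adj u v ↔ G.Adj u v ∧ ¬(u ∈ W ∧ v ∈ W)) →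
        R ⊔ B = GW →
        ((∃ v : V, (1 - 2 * η ^ ((1 : ℝ) / 2)) * (Fintype.card V : ℝ) ≤
            ({u : V | R.Reachable v u}.ncard : ℝ)) ∨
         (∃ v : V, (1 - 2 * η ^ ((1 : ℝ) / 2)) * (Fintype.card V : ℝ) ≤
            ({u : V | B.Reachable v u}.ncard : ℝ))) ∨
        ((∃ w ∈ W, ({u : V | u ∉ W ∧ ¬ R.Adj w u}.ncard : ℝ) ≤
            3 * η ^ ((1 : ℝ) / 2) * (Fintype.card V : ℝ)) ∧
         (∃ w ∈ W, ({u : V | u ∉ W ∧ ¬ B.Adj w u}.ncard : ℝ) ≤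
            3 * η ^ ((1 : ℝ) / 2) * (Fintype.card V : ℝ))) := by
  intro V _ _ G W hK hdeg hW _ GW R B hGW hRB
  set n : ℝ := (Fintype.card V : ℝ)
  set δ : ℝ := η ^ ((1 : ℝ) / 2)
  have hn : 0 < n := (one_div_pos.2 hη0).trans_le hK
  have hδδ : δ * δ = η := by rw [← Real.rpow_add hη0]; norm_num
  have hδ1 : δ ≤ 1 := Real.rpow_le_one hη0.le (by linarith) (by norm_num)
  have hηδ : η ≤ δ := by nlinarith [Real.rpow_nonneg hη0.le ((1 : ℝ) / 2)]
  have hmiss (v : V) : ((Gᶜ.neighborSet v).ncard : ℝ) ≤ η * n :=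
    ncard_compl_neighborSet_le hη0.le (hdeg v)
  have hcol (u v : V) (huv : G.Adj u v) (hW : ¬(u ∈ (W : Set V) ∧ v ∈ (W : Set V))) :
      R.Adj u v ∨ B.Adj u v := by
    rw [← sup_adj, hRB, hGW]; exact ⟨huv, hW⟩
  have hWcard : 2 * (η * n) < ((W : Set V).ncard : ℝ) := by rw [Set.ncard_coe_finset]; nlinarith
  have large {X Y : SimpleGraph V}
      (hXY : ∀ u v, G.Adj u v → ¬(u ∈ (W : Set V) ∧ v ∈ (W : Set V)) →
        X.Adj u v ∨ Y.Adj u v)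
      (hnd : ∀ w ∈ W, 3 * δ * n < ({u : V | u ∉ W ∧ ¬ Y.Adj w u}.ncard : ℝ)) :
      (∃ v, (1 - 2 * δ) * n ≤ ({u | X.Reachable v u}.ncard : ℝ)) ∨
        (∃ v, (1 - 2 * δ) * n ≤ ({u | Y.Reachable v u}.ncard : ℝ)) := by
    rw [show (1 - 2 * δ) * n = n - 2 * δ * n by ring]
    exact exists_large_component hmiss hXY (by positivity) (by nlinarith) hWcard
      fun w hw => (by nlinarith : 3 * (η * n) ≤ 3 * δ * n).trans_lt (hnd w hw)
  by_cases hWr : ∃ w ∈ W, ({u : V | u ∉ W ∧ ¬ R.Adj w u}.ncard : ℝ) ≤ 3 * δ * n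
  · by_cases hWb : ∃ w ∈ W, ({u : V | u ∉ W ∧ ¬ B.Adj w u}.ncard : ℝ) ≤ 3 * δ * n
    · exact .inr ⟨hWr, hWb⟩
    · push Not at hWb
      exact .inl (large hcol hWb)
  · push Not at hWr
    exact .inl (large (fun u v huv hW => (hcol u v huv hW).symm) hWr).symm
end
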